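/- Let g be the Euclidean metric written in semigeodesic coordinates (x', x³) with respect to a hypersurface S = {x³ = 0}, so g_{α3} = δ_{α3}. Let u be a covector field with stress tensor σ(u) = λ(δu)g + 2μ d^s u and Neumann data (Nu)ᵢ = σᵢⱼ(u)ν^j on S. Then the normal derivatives of u on S are determined by u|_S and Nu|_S via: ∇₃u_α = (1/μ)(Nu)_α − ∇_α u₃ for α = 1,2, and ∂₃u₃ = (1/(2μ))((Nu)₃ − λ(δu)), where δu is expressible through u|_S, the tangential derivatives of u, and Nu on S. -/

import Mathlib

open Matrix

/-- Christoffel symbols `Γᵢⱼᵏ = (1/2) gᵏˡ (∂ᵢ gⱼₗ + ∂ⱼ gᵢₗ − ∂ₗ gᵢⱼ)` of a metric `g`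
(with pointwise inverse `ginv`) in coordinates on `ℝ³`. -/
noncomputable def christoffel (g ginv : (Fin 3 → ℝ) → Matrix (Fin 3) (Fin 3) ℝ)
    (x : Fin 3 → ℝ) (i j k : Fin 3) : ℝ :=
  (1 / 2) * ∑ l, ginv x k l *
    (fderiv ℝ (fun y => g y j l) x (Pi.single i 1)
      + fderiv ℝ (fun y => g y i l) x (Pi.single j 1)
      - fderiv ℝ (fun y => g y i j) x (Pi.single l 1))

/-- Covariant derivative `∇ᵢ uⱼ = ∂ᵢ uⱼ − Γᵢⱼᵏ uₖ` of a covector field `u`. -/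
noncomputable def covDeriv (g ginv : (Fin 3 → ℝ) → Matrix (Fin 3) (Fin 3) ℝ)
    (u : (Fin 3 → ℝ) → Fin 3 → ℝ) (x : Fin 3 → ℝ) (i j : Fin 3) : ℝ :=
  fderiv ℝ (fun y => u y j) x (Pi.single i 1) - ∑ k, christoffel g ginv x i j k * u x k

/-- Divergence `δu = ∇ⁱ uᵢ = gⁱʲ ∇ᵢ uⱼ` of a covector field. -/
noncomputable def divg (g ginv : (Fin 3 → ℝ) → Matrix (Fin 3) (Fin 3) ℝ)
    (u : (Fin 3 → ℝ) → Fin 3 → ℝ) (x : Fin 3 → ℝ) : ℝ :=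
  ∑ i, ∑ j, ginv x i j * covDeriv g ginv u x i j

/-- Stress tensor `σ(u) = λ (δu) g + 2μ dˢu`, i.e.
`σᵢⱼ = λ (δu) gᵢⱼ + μ (∇ᵢuⱼ + ∇ⱼuᵢ)`. -/
noncomputable def stress (g ginv : (Fin 3 → ℝ) → Matrix (Fin 3) (Fin 3) ℝ)
    (lam mu : (Fin 3 → ℝ) → ℝ) (u : (Fin 3 → ℝ) → Fin 3 → ℝ)
    (x : Fin 3 → ℝ) (i j : Fin 3) : ℝ :=
  lam x * divg g ginv u x * g x i j
    + mu x * (covDeriv g ginv u x i j + covDeriv g ginv u x j i)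

/-- In semigeodesic coordinates `(x', x³)` for the Euclidean metric `g`
w.r.t. the hypersurface `S = {x³ = 0}` (so `g_{α3} = δ_{α3}` and the unit normal is
`ν = ∂₃`), the Neumann data `(Nu)ᵢ = σᵢⱼ(u) ν^j = σ_{i3}(u)` together with `u|_S` determine
the normal derivatives of `u` on `S`:
`∇₃u_α = (1/μ)(Nu)_α − ∇_α u₃` for `α = 1,2`, and `∂₃u₃ = (1/(2μ))((Nu)₃ − λ δu)`. -/
theorem neumann_determines_normal_derivative
    (g ginv : (Fin 3 → ℝ) → Matrix (Fin 3) (Fin 3) ℝ)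
    (hsemi : ∀ y i, g y i 2 = (if i = 2 then (1 : ℝ) else 0)
      ∧ g y 2 i = (if i = 2 then (1 : ℝ) else 0))
    (hsymm : ∀ y, (g y)ᵀ = g y)
    (hinv : ∀ y, g y * ginv y = 1 ∧ ginv y * g y = 1)
    (hg : ∀ i j, ContDiff ℝ (⊤ : ℕ∞) fun y => g y i j)
    (lam mu : (Fin 3 → ℝ) → ℝ) (hlam : ∀ y, 0 < lam y) (hmu : ∀ y, 0 < mu y)
    (u : (Fin 3 → ℝ) → Fin 3 → ℝ) (hu : ∀ j, Differentiable ℝ fun y => u y j) :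
    ∀ x : Fin 3 → ℝ, x 2 = 0 →
      (∀ α : Fin 3, α ≠ 2 →
          covDeriv g ginv u x 2 α
            = (1 / mu x) * stress g ginv lam mu u x α 2 - covDeriv g ginv u x α 2)
      ∧ fderiv ℝ (fun y => u y 2) x (Pi.single 2 1)
          = (1 / (2 * mu x)) * (stress g ginv lam mu u x 2 2 - lam x * divg g ginv u x) := by
  intro x _
  have hmux : mu x ≠ 0 := (hmu x).ne'
  -- Γ₂₂ᵏ = 0 since g_{2l} and g_{l2} are constant
  have hc : ∀ k, christoffel g ginv x 2 2 k = 0 := by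
    intro k
    unfold christoffel
    have h1 : ∀ l : Fin 3, (fun y => g y 2 l) = fun _ => if l = 2 then (1 : ℝ) else 0 :=
      fun l => funext fun y => (hsemi y l).2
    have h2 : (fun y => g y 2 2) = fun _ => (1 : ℝ) := by
      funext y; simpa using (hsemi y 2).2
    have : ∀ l : Fin 3,
        (fderiv ℝ (fun y => g y 2 l) x (Pi.single 2 1)
          + fderiv ℝ (fun y => g y 2 l) x (Pi.single 2 1)
          - fderiv ℝ (fun y => g y 2 2) x (Pi.single l 1)) = 0 := by
      intro l
      rw [h1 l, h2, fderiv_fun_const, fderiv_fun_const]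
      simp
    rw [Finset.sum_congr rfl fun l _ => by rw [this l, mul_zero]]
    simp
  have hcov22 : covDeriv g ginv u x 2 2 = fderiv ℝ (fun y => u y 2) x (Pi.single 2 1) := by
    unfold covDeriv
    rw [Finset.sum_congr rfl fun k _ => by rw [hc k, zero_mul]]
    simp
  constructor
  · intro α hα
    have hgα2 : g x α 2 = 0 := by rw [(hsemi x α).1, if_neg hα]
    unfold stress
    rw [hgα2]
    field_simp
    ring
  · unfold stress
    rw [(hsemi x 2).1, if_pos rfl, hcov22]
    field_simp
    ring
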